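/- arXiv:2409.08142 — 3 statements merged into one kernel-verified Lean document; each statement's English description precedes it below -/
import Mathlib

section
/- Best-first search correctness on a finitely branching candidate tree: let T be a (possibly infinite-depth but finitely branching) rooted tree of candidates with a weight function w into a linear order such that w(child) ≥ w(parent) for every edge. If we repeatedly extract a minimum-weight node from a priority queue initialized with the root and insert its children upon extraction, then the sequence of extracted nodes has nondecreasing weights, and the k-th extracted node is a node of k-th smallest weight in T among all nodes (counted with multiplicity). -/
/-!
Monotonicity is local: the node extracted at step `t + 1` either was already in the frontier
at step `t`, so it weighs at least `e t`, a minimum of that frontier, or it is a child of `e t`.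

For exactly-once extraction it suffices that no node is extracted twice, since there are
`Fintype.card V` steps. Every frontier node is the root or a child of an earlier extraction;
so if an extracted node `e s` reappeared as a child of a later `e t`, uniqueness of parents would
make `e t` the parent of `e s`, extracted before `e s` and hence already gone from the frontier
at step `t`, which is absurd.
-/

open Finset

theorem existsUnique_lt_card_eq_of_injOn {V : Type*} [Fintype V] {e : ℕ → V}
    (he : Set.InjOn e (Set.Iio (Fintype.card V))) (v : V) : ∃! t, t < Fintype.card V ∧ e t = v := by
  have hinj : Function.Injective fun i : Fin (Fintype.card V) => e i :=
    fun i j hij => Fin.ext (he i.isLt j.isLt hij)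
  obtain ⟨i, hi⟩ := ((Fintype.bijective_iff_injective_and_card _).mpr ⟨hinj, by simp⟩).2 v
  refine ⟨i, ⟨i.isLt, hi⟩, fun t ⟨ht, htv⟩ => ?_⟩
  exact congrArg Fin.val (@hinj ⟨t, ht⟩ i (htv.trans hi.symm))

namespace BestFirst

variable {V : Type*} {children : V → Finset V} {F : ℕ → Finset V} {e : ℕ → V} {N : ℕ}

theorem mem_frontier_eq_root_or_mem_children [DecidableEq V] {root : V} (hF0 : F 0 = {root})
    (hupd : ∀ t < N, F (t + 1) = (F t).erase (e t) ∪ children (e t)) :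
    ∀ t ≤ N, ∀ x ∈ F t, x = root ∨ ∃ i < t, x ∈ children (e i) := by
  intro t ht
  induction t with
  | zero => simp [hF0]
  | succ t ih =>
    intro x hx
    rw [hupd t ht, mem_union] at hx
    rcases hx with hx | hx
    · obtain hroot | ⟨i, hi, hxi⟩ := ih (by omega) x (mem_of_mem_erase hx)
      · exact .inl hroot
      · exact .inr ⟨i, hi.trans t.lt_succ_self, hxi⟩
    · exact .inr ⟨t, t.lt_succ_self, hx⟩

theorem extracted_not_mem_frontier [DecidableEq V] {root : V} (hF0 : F 0 = {root})
    (hrootnc : ∀ u, root ∉ children u)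
    (huniq : ∀ u v x, x ∈ children u → x ∈ children v → u = v)
    (hmem : ∀ t < N, e t ∈ F t)
    (hupd : ∀ t < N, F (t + 1) = (F t).erase (e t) ∪ children (e t)) :
    ∀ t ≤ N, ∀ s < t, e s ∉ F t := by
  intro t ht
  induction t with
  | zero => simp
  | succ t ih =>
    intro s hs
    rw [hupd t ht, mem_union, mem_erase, not_or, not_and_or, not_not]
    refine ⟨?_, fun hchild => ?_⟩
    · rcases (Nat.lt_succ_iff.mp hs).lt_or_eq with hlt | rfl
      · exact .inr (ih (by omega) s hlt)
      · exact .inl rfl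
    obtain hroot | ⟨j, hj, hparent⟩ :=
      mem_frontier_eq_root_or_mem_children hF0 hupd s (by omega) _ (hmem s (by omega))
    · exact hrootnc (e t) (hroot ▸ hchild)
    · have hjt : e j = e t := huniq _ _ _ hparent hchild
      exact ih (by omega) j (by omega) (hjt ▸ hmem t ht)

theorem extracted_injOn [DecidableEq V] {root : V} (hF0 : F 0 = {root})
    (hrootnc : ∀ u, root ∉ children u)
    (huniq : ∀ u v x, x ∈ children u → x ∈ children v → u = v)
    (hmem : ∀ t < N, e t ∈ F t)
    (hupd : ∀ t < N, F (t + 1) = (F t).erase (e t) ∪ children (e t)) :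
    Set.InjOn e (Set.Iio N) := by
  have hgone := extracted_not_mem_frontier hF0 hrootnc huniq hmem hupd
  intro s (hs : s < N) t (ht : t < N) hst
  by_contra hne
  rcases Nat.lt_or_gt_of_ne hne with hlt | hlt
  · exact hgone t ht.le s hlt (hst ▸ hmem t ht)
  · exact hgone s hs.le t hlt (hst.symm ▸ hmem s hs)

theorem weight_extracted_monotoneOn {W : Type*} [Preorder W] [DecidableEq V] {w : V → W}
    (hmono : ∀ v, ∀ c ∈ children v, w v ≤ w c)
    (hmem : ∀ t < N, e t ∈ F t) (hmin : ∀ t < N, ∀ x ∈ F t, w (e t) ≤ w x)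
    (hupd : ∀ t < N, F (t + 1) = (F t).erase (e t) ∪ children (e t)) :
    MonotoneOn (w ∘ e) (Set.Iio N) := by
  refine monotoneOn_of_le_succ Set.ordConnected_Iio fun t _ _ (hsucc : t + 1 < N) => ?_
  have hnext := hmem (t + 1) hsucc
  rw [hupd t (by omega), mem_union] at hnext
  rcases hnext with hfrontier | hchild
  · exact hmin t (by omega) _ (mem_of_mem_erase hfrontier)
  · exact hmono _ _ hchild

end BestFirst

theorem stmt_10_general {V : Type*} [Fintype V] [DecidableEq V] {W : Type*} [LinearOrder W]
    (children : V → Finset V) (root : V) (w : V → W)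
    (hmono : ∀ v : V, ∀ c ∈ children v, w v ≤ w c)
    (hrootnc : ∀ u : V, root ∉ children u)
    (huniq : ∀ u v x : V, x ∈ children u → x ∈ children v → u = v)
    (N : ℕ) (hN : N = Fintype.card V)
    (F : ℕ → Finset V) (e : ℕ → V)
    (hF0 : F 0 = {root})
    (hstep : ∀ t, t < N → e t ∈ F t ∧ (∀ x ∈ F t, w (e t) ≤ w x) ∧
      F (t + 1) = (F t).erase (e t) ∪ children (e t)) :
    (∀ s t : ℕ, s ≤ t → t < N → w (e s) ≤ w (e t)) ∧
    (∀ v : V, ∃! t : ℕ, t < N ∧ e t = v) := by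
  have hmem t (ht : t < N) := (hstep t ht).1
  have hmin t (ht : t < N) := (hstep t ht).2.1
  have hupd t (ht : t < N) := (hstep t ht).2.2
  have hmonoOn := BestFirst.weight_extracted_monotoneOn hmono hmem hmin hupd
  have hinj := BestFirst.extracted_injOn hF0 hrootnc huniq hmem hupd
  subst hN
  exact ⟨fun s t hst ht => hmonoOn (hst.trans_lt ht) ht hst,
    existsUnique_lt_card_eq_of_injOn hinj⟩

/-- Best-first search correctness on a candidate tree with edge-monotone
weights: if a priority queue initialized with the root repeatedly extracts a
minimum-weight node `e t` from the frontier `F t` and inserts its children,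
then the extracted weights are nondecreasing and every node is extracted
exactly once — hence the `k`-th extracted node has the `k`-th smallest weight
(with multiplicity) among all nodes. -/
theorem stmt_10 {V : Type*} [Fintype V] [DecidableEq V] {W : Type*} [LinearOrder W]
    (children : V → Finset V) (root : V) (w : V → W)
    (hmono : ∀ v : V, ∀ c ∈ children v, w v ≤ w c)
    (hrootnc : ∀ u : V, root ∉ children u)
    (huniq : ∀ u v x : V, x ∈ children u → x ∈ children v → u = v)
    (hirrefl : ∀ v : V, v ∉ children v)
    (hreach : ∀ v : V, Relation.ReflTransGen (fun a b => b ∈ children a) root v)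
    (N : ℕ) (hN : N = Fintype.card V)
    (F : ℕ → Finset V) (e : ℕ → V)
    (hF0 : F 0 = {root})
    (hstep : ∀ t, t < N → e t ∈ F t ∧ (∀ x ∈ F t, w (e t) ≤ w x) ∧
      F (t + 1) = (F t).erase (e t) ∪ children (e t)) :
    (∀ s t : ℕ, s ≤ t → t < N → w (e s) ≤ w (e t)) ∧
    (∀ v : V, ∃! t : ℕ, t < N ∧ e t = v) :=
  stmt_10_general children root w hmono hrootnc huniq N hN F e hF0 hstep
end

section
/- Stack-based partition enumeration visits each element exactly once: in the candidate tree where the children of each node are obtained by either 'advancing' the last chosen tuple within its join group or 'extending' with the first tuple of the next group, every complete answer (maximal list of choices, one per group, in order) is generated by exactly one root-to-node path; equivalently, the map from complete answers to their generating sequences of advance/extend operations is a bijection. -/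
/-- A complete answer is a choice of a (1-indexed) position in each join group,
bounded by the group sizes `m`. -/
def validAnswer (ℓ : ℕ) (m : Fin ℓ → ℕ) (j : Fin ℓ → ℕ) : Prop :=
  ∀ i : Fin ℓ, 1 ≤ j i ∧ j i ≤ m i

/-- `stepRel a b` holds when candidate `b` is generated from the complete
answer `a` by advancing the position at some index `i` at or after the current
frontier of `a` (all positions after `i` in `a` equal `1`) and resetting all
later positions to `1`. -/
def stepRel (ℓ : ℕ) (a b : Fin ℓ → ℕ) : Prop :=
  ∃ i : Fin ℓ, (∀ k : Fin ℓ, k < i → b k = a k) ∧ b i = a i + 1 ∧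
    (∀ k : Fin ℓ, i < k → b k = 1) ∧ (∀ k : Fin ℓ, i < k → a k = 1)

/-!
A step `a → b` raises `a` by one at a single index `i` after which all entries are `1`, so for
positive `a` the index `i` is the last one at which `b ≠ 1`. Hence the unique predecessor of an
answer `b ≠ 1` is `b` with that entry decremented, which is again an answer and pointwise below
`b`; well-founded induction on the pointwise order then reaches every answer from the root.
-/

open Function

theorem existsUnique_last_ne {ι α : Type*} [Fintype ι] [LinearOrder ι] {f : ι → α} {c : α}
    (hf : f ≠ fun _ => c) : ∃! i, f i ≠ c ∧ ∀ k, i < k → f k = c := by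
  classical
  obtain ⟨j, hj⟩ : ∃ j, f j ≠ c := by
    by_contra! h
    exact hf (funext h)
  obtain ⟨i, hi, hmax⟩ :=
    (Finset.univ.filter (f · ≠ c)).exists_max_image id ⟨j, by simpa using hj⟩
  simp only [Finset.mem_filter, Finset.mem_univ, true_and, id] at hi hmax
  refine ⟨i, ⟨hi, fun k hik => ?_⟩, fun i' ⟨hi', hlast'⟩ => ?_⟩
  · by_contra hk
    exact (hmax k hk).not_gt hik
  · exact le_antisymm (hmax i' hi') (not_lt.mp fun h => hi (hlast' i h))

theorem validAnswer.update {ℓ : ℕ} {m b : Fin ℓ → ℕ} (hb : validAnswer ℓ m b) {i : Fin ℓ}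
    {x : ℕ} (hx₁ : 1 ≤ x) (hx₂ : x ≤ m i) : validAnswer ℓ m (update b i x) := by
  intro k
  rcases eq_or_ne k i with rfl | hk
  · simpa using ⟨hx₁, hx₂⟩
  · simpa [hk] using hb k

theorem stepRel_iff {ℓ : ℕ} {a b : Fin ℓ → ℕ} :
    stepRel ℓ a b ↔ ∃ i, (∀ k, i < k → a k = 1) ∧ b = update a i (a i + 1) := by
  constructor
  · rintro ⟨i, hlt, hi, hbgt, hagt⟩
    refine ⟨i, hagt, funext fun k => ?_⟩
    rcases lt_trichotomy k i with hk | rfl | hk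
    · simp [hk.ne, hlt k hk]
    · simp [hi]
    · simp [hk.ne', hbgt k hk, hagt k hk]
  · rintro ⟨i, hagt, rfl⟩
    refine ⟨i, fun k hk => ?_, by simp, fun k hk => ?_, hagt⟩
    · simp [hk.ne]
    · simp [hk.ne', hagt k hk]

theorem stepRel.lt {ℓ : ℕ} {a b : Fin ℓ → ℕ} (h : stepRel ℓ a b) : a < b := by
  obtain ⟨i, -, rfl⟩ := stepRel_iff.mp h
  exact lt_update_self_iff.mpr (Nat.lt_succ_self _)

theorem stepRel_iff_eq_update_last {ℓ : ℕ} {a b : Fin ℓ → ℕ} (ha : ∀ k, 1 ≤ a k) :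
    stepRel ℓ a b ↔
      ∃ i, (b i ≠ 1 ∧ ∀ k, i < k → b k = 1) ∧ a = update b i (b i - 1) := by
  rw [stepRel_iff]
  constructor
  · rintro ⟨i, hagt, rfl⟩
    refine ⟨i, ⟨by simpa using Nat.one_le_iff_ne_zero.mp (ha i), fun k hk => ?_⟩, by simp⟩
    simp [hk.ne', hagt k hk]
  · rintro ⟨i, ⟨hbi, hbgt⟩, rfl⟩
    have hbi_pos : 1 ≤ b i := by have := ha i; rw [update_self] at this; omega
    refine ⟨i, fun k hk => by simp [hk.ne', hbgt k hk], ?_⟩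
    simp [Nat.sub_add_cancel hbi_pos]

theorem existsUnique_validAnswer_stepRel {ℓ : ℕ} {m b : Fin ℓ → ℕ} (hb : validAnswer ℓ m b)
    (hne : b ≠ fun _ => 1) : ∃! a, validAnswer ℓ m a ∧ stepRel ℓ a b := by
  obtain ⟨i, hlast, huniq⟩ := existsUnique_last_ne hne
  have hbi : 2 ≤ b i := by have := (hb i).1; have := hlast.1; omega
  have hpred : validAnswer ℓ m (update b i (b i - 1)) :=
    hb.update (by omega) ((Nat.sub_le _ _).trans (hb i).2)
  refine ⟨update b i (b i - 1),
    ⟨hpred, (stepRel_iff_eq_update_last fun k => (hpred k).1).mpr ⟨i, hlast, rfl⟩⟩, ?_⟩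
  rintro a ⟨ha, hstep⟩
  obtain ⟨i', hlast', rfl⟩ := (stepRel_iff_eq_update_last fun k => (ha k).1).mp hstep
  rw [huniq i' hlast']

theorem reflTransGen_stepRel_of_validAnswer {ℓ : ℕ} {m b : Fin ℓ → ℕ}
    (hb : validAnswer ℓ m b) :
    Relation.ReflTransGen (fun x y => validAnswer ℓ m x ∧ validAnswer ℓ m y ∧ stepRel ℓ x y)
      (fun _ => 1) b := by
  induction b using WellFoundedLT.induction with
  | _ b ih =>
    by_cases hne : b = fun _ => 1
    · exact hne ▸ .refl
    · obtain ⟨a, ⟨ha, hstep⟩, -⟩ := existsUnique_validAnswer_stepRel hb hne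
      exact (ih a hstep.lt ha).tail ⟨ha, hb, hstep⟩

theorem stmt_11_general (ℓ : ℕ) (m : Fin ℓ → ℕ) :
    (∀ b : Fin ℓ → ℕ, validAnswer ℓ m b → b ≠ (fun _ => 1) →
      ∃! a : Fin ℓ → ℕ, validAnswer ℓ m a ∧ stepRel ℓ a b) ∧
    (∀ b : Fin ℓ → ℕ, validAnswer ℓ m b →
      Relation.ReflTransGen
        (fun x y => validAnswer ℓ m x ∧ validAnswer ℓ m y ∧ stepRel ℓ x y)
        (fun _ => 1) b) :=
  ⟨fun _ hb hne => existsUnique_validAnswer_stepRel hb hne,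
    fun _ hb => reflTransGen_stepRel_of_validAnswer hb⟩

/-- The advance/extend candidate generation visits each complete answer exactly
once: every answer other than the all-first root has a unique generating
predecessor, and every answer is reachable from the root. -/
theorem stmt_11 (ℓ : ℕ) (m : Fin ℓ → ℕ) (hm : ∀ i, 1 ≤ m i) :
    (∀ b : Fin ℓ → ℕ, validAnswer ℓ m b → b ≠ (fun _ => 1) →
      ∃! a : Fin ℓ → ℕ, validAnswer ℓ m a ∧ stepRel ℓ a b) ∧
    (∀ b : Fin ℓ → ℕ, validAnswer ℓ m b →
      Relation.ReflTransGen
        (fun x y => validAnswer ℓ m x ∧ validAnswer ℓ m y ∧ stepRel ℓ x y)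
        (fun _ => 1) b) :=
  stmt_11_general ℓ m
end

section
/- If a lexicographic variable order L is a restriction of a reverse alpha elimination order of an acyclic conjunctive query Q, then L contains no disruptive trio: there are no three variables x1, x2, x3 occurring in L in relative order x1 → x2 → x3 such that x1 and x2 do not co-occur in any atom of Q but x3 co-occurs with both x1 and x2. -/
/-- Each `σ i` is simplicial in the hypergraph induced on the variables `σ j` with `i ≤ j`. -/
def IsAlphaEliminationOrder {V : Type*} (E : Set (Set V)) {m : ℕ} (σ : Fin m → V) : Prop :=
  ∀ i : Fin m, ∃ e ∈ E,
    ∀ y : V, (∃ jy : Fin m, i ≤ jy ∧ σ jy = y) → (∃ f ∈ E, σ i ∈ f ∧ y ∈ f) → y ∈ e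

theorem IsAlphaEliminationOrder.cooccur_of_later_neighbors {V : Type*} {E : Set (Set V)} {m : ℕ}
    {σ : Fin m → V} (hσ : IsAlphaEliminationOrder E σ) {i j k : Fin m} (hij : i ≤ j) (hik : i ≤ k)
    (hj : ∃ f ∈ E, σ i ∈ f ∧ σ j ∈ f) (hk : ∃ f ∈ E, σ i ∈ f ∧ σ k ∈ f) :
    ∃ e ∈ E, σ j ∈ e ∧ σ k ∈ e := by
  obtain ⟨e, heE, he⟩ := hσ i
  exact ⟨e, heE, he _ ⟨j, hij, rfl⟩ hj, he _ ⟨k, hik, rfl⟩ hk⟩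

theorem stmt_13_general {V : Type*} (E : Set (Set V)) (m : ℕ) (σ : Fin m → V)
    (hsimp : ∀ i : Fin m, ∃ e ∈ E,
      ∀ y : V, (∃ jy : Fin m, i ≤ jy ∧ σ jy = y) →
        (∃ f ∈ E, σ i ∈ f ∧ y ∈ f) → y ∈ e)
    (x1 x2 x3 : V) (i1 i2 i3 : Fin m)
    (hx1 : σ i1 = x1) (hx2 : σ i2 = x2) (hx3 : σ i3 = x3)
    (horder : i3 < i2 ∧ i2 < i1) :
    ¬ ((¬ ∃ e ∈ E, x1 ∈ e ∧ x2 ∈ e) ∧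
       (∃ e ∈ E, x1 ∈ e ∧ x3 ∈ e) ∧
       (∃ e ∈ E, x2 ∈ e ∧ x3 ∈ e)) := by
  subst hx1 hx2 hx3
  rintro ⟨hx12, ⟨f1, hf1, hx1f1, hx3f1⟩, ⟨f2, hf2, hx2f2, hx3f2⟩⟩
  have hσ : IsAlphaEliminationOrder E σ := hsimp
  exact hx12 <| hσ.cooccur_of_later_neighbors (horder.1.trans horder.2).le horder.1.le
    ⟨f1, hf1, hx3f1, hx1f1⟩ ⟨f2, hf2, hx3f2, hx2f2⟩

/-- If a lexicographic order `L` is a restriction of the reverse of an alpha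
elimination order `σ` of the query hypergraph `(V, E)`, then `L` contains no
disruptive trio.  Here `σ : Fin m → V` enumerates the variables in elimination
order, `hsimp` states that each `σ i` is simplicial in the hypergraph induced
on the not-yet-eliminated variables `{σ j : i ≤ j}`, and `x1, x2, x3` are three
variables of `L` in relative order `x1 → x2 → x3`, i.e. appearing in reverse
elimination order (`i3 < i2 < i1`). -/
theorem stmt_13 {V : Type*} (E : Set (Set V)) (m : ℕ) (σ : Fin m → V)
    (hσ : Function.Bijective σ)
    (hsimp : ∀ i : Fin m, ∃ e ∈ E,
      ∀ y : V, (∃ jy : Fin m, i ≤ jy ∧ σ jy = y) →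
        (∃ f ∈ E, σ i ∈ f ∧ y ∈ f) → y ∈ e)
    (x1 x2 x3 : V) (i1 i2 i3 : Fin m)
    (hx1 : σ i1 = x1) (hx2 : σ i2 = x2) (hx3 : σ i3 = x3)
    (horder : i3 < i2 ∧ i2 < i1) :
    ¬ ((¬ ∃ e ∈ E, x1 ∈ e ∧ x2 ∈ e) ∧
       (∃ e ∈ E, x1 ∈ e ∧ x3 ∈ e) ∧
       (∃ e ∈ E, x2 ∈ e ∧ x3 ∈ e)) :=
  stmt_13_general E m σ hsimp x1 x2 x3 i1 i2 i3 hx1 hx2 hx3 horder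
end
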